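/- Let Λ be an r × n matrix with nonnegative real entries (r ≤ n) and X = diag(x_1,…,x_n). Then per(ΛX) = ∑_{S ⊆ [n], |S|=r} per(Λ↾S)·∏_{i∈S} x_i, and per(ΛX) is nonvanishing on H^n or identically zero; in particular, if some r × r submatrix of Λ has positive permanent, then per(ΛX) ≠ 0 whenever Re(x_i) > 0 for all i. -/

import Mathlib

/-!
Write `P(Λ) = per(ΛX)`. Expanding along row `i` gives `P(Λ) = ∑ⱼ Λᵢⱼ xⱼ P(Λ - i - j)`, and along
column `j` gives `P(Λ) = P(Λ - j) + xⱼ ∑ᵢ Λᵢⱼ P(Λ - i - j)`, where `Λ - i - j` deletes row `i` and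
column `j`. This is the Heilmann–Lieb recursion: by induction on the number of rows, the ratio
`P(Λ) / (xⱼ P(Λ - j))` lies in `H` whenever `x ∈ Hⁿ` and `Λ - j` has a positive transversal (an
injection `f` with all `Λᵢ,f(i) > 0`). Indeed, with `M = Λ - j`, the column expansion writes it as
`1/xⱼ + ∑ᵢ Λᵢⱼ (P(M) / P(M - i))⁻¹`, and the row expansion writes `P(M) / P(M - i)` as a nonnegative
combination of inverses of such ratios for matrices with one row fewer, one of them with a positive
coefficient; `H` is closed under inversion and positive combinations. The row expansion thus also
shows `P(Λ) ≠ 0` on `Hⁿ` when `Λ` has a positive transversal, and otherwise every term of `P(Λ)`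
vanishes.
-/

noncomputable def perRect {r n : ℕ} (M : Matrix (Fin r) (Fin n) ℂ) : ℂ :=
  ∑ f : Fin r ↪ Fin n, ∏ i, M i (f i)

noncomputable def perSq {r : ℕ} (M : Matrix (Fin r) (Fin r) ℝ) : ℝ :=
  ∑ σ : Equiv.Perm (Fin r), ∏ i, M i (σ i)

open Finset

namespace Function.Embedding

variable {r m : ℕ}

def insertNth (i : Fin (r + 1)) (j : Fin (m + 1)) (g : Fin r ↪ Fin m) :
    Fin (r + 1) ↪ Fin (m + 1) where
  toFun a := Fin.insertNth (α := fun _ => Fin (m + 1)) i j (j.succAbove ∘ g) a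
  inj' a b := by
    rcases Fin.eq_self_or_eq_succAbove i a with ha | ⟨a, rfl⟩ <;>
      rcases Fin.eq_self_or_eq_succAbove i b with hb | ⟨b, rfl⟩ <;>
      subst_vars <;> simp [Fin.succAbove_ne, (Fin.succAbove_ne _ _).symm]

section insertNth

variable (i : Fin (r + 1)) (j : Fin (m + 1)) (g : Fin r ↪ Fin m)

@[simp] lemma insertNth_apply_same : insertNth i j g i = j :=
  Fin.insertNth_apply_same (α := fun _ => Fin (m + 1)) ..

@[simp] lemma insertNth_apply_succAbove (k : Fin r) :
    insertNth i j g (i.succAbove k) = j.succAbove (g k) :=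
  Fin.insertNth_apply_succAbove (α := fun _ => Fin (m + 1)) ..

lemma insertNth_injective : Function.Injective (insertNth i j) := fun g g' h =>
  ext fun k => by simpa using DFunLike.congr_fun h (i.succAbove k)

lemma exists_eq_insertNth (f : Fin (r + 1) ↪ Fin (m + 1)) :
    ∃ g, f = insertNth i (f i) g := by
  have h k : ∃ l, (f i).succAbove l = f (i.succAbove k) :=
    Fin.exists_succAbove_eq (f.injective.ne (Fin.succAbove_ne i k))
  choose g hg using h
  have hg_inj : Function.Injective g := fun k l hkl =>
    Fin.succAbove_right_injective (f.injective (by rw [← hg, ← hg, hkl]))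
  refine ⟨⟨g, hg_inj⟩, ext fun a => ?_⟩
  rcases Fin.eq_self_or_eq_succAbove i a with rfl | ⟨a, rfl⟩ <;> simp [hg]

end insertNth

variable {M : Type*} [AddCommMonoid M]

lemma sum_filter_apply_eq (F : (Fin (r + 1) ↪ Fin (m + 1)) → M) (i : Fin (r + 1))
    (j : Fin (m + 1)) : ∑ f with f i = j, F f = ∑ g, F (insertNth i j g) := by
  symm
  refine sum_nbij (insertNth i j) (by simp) (insertNth_injective i j).injOn ?_ (fun _ _ => rfl)
  intro f hf
  obtain ⟨g, hg⟩ := exists_eq_insertNth i f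
  exact ⟨g, mem_coe.2 (mem_univ g), by rw [hg, (mem_filter.1 hf).2]⟩

lemma sum_filter_forall_ne (F : (Fin r ↪ Fin (m + 1)) → M) (j : Fin (m + 1)) :
    ∑ f with ∀ a, f a ≠ j, F f = ∑ g : Fin r ↪ Fin m, F (g.trans j.succAboveEmb) := by
  symm
  refine sum_nbij (·.trans j.succAboveEmb) (by simp [Fin.succAbove_ne])
    (fun g _ g' _ h => ext fun k => Fin.succAbove_right_injective (DFunLike.congr_fun h k))
    ?_ (fun _ _ => rfl)
  intro f hf
  have h k : ∃ l, j.succAbove l = f k := Fin.exists_succAbove_eq ((mem_filter.1 hf).2 k)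
  choose g hg using h
  have hg_inj : Function.Injective g := fun k l hkl => f.injective (by rw [← hg, ← hg, hkl])
  exact ⟨⟨g, hg_inj⟩, mem_coe.2 (mem_univ _), ext fun k => by simp [hg]⟩

lemma sum_filter_map_eq {n : ℕ} (F : (Fin r ↪ Fin n) → M)
    (S : Finset (Fin n)) (hS : S.card = r) :
    ∑ f with univ.map f = S, F f =
      ∑ σ : Equiv.Perm (Fin r), F (σ.toEmbedding.trans (S.orderEmbOfFin hS).toEmbedding) := by
  symm
  refine sum_nbij (fun σ => σ.toEmbedding.trans (S.orderEmbOfFin hS).toEmbedding) ?_ ?_ ?_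
    (fun _ _ => rfl)
  · intro σ _
    simp only [mem_filter, mem_univ, true_and]
    rw [← map_map, map_univ_equiv, map_orderEmbOfFin_univ]
  · exact fun σ _ τ _ h =>
      Equiv.ext fun i => (S.orderEmbOfFin hS).injective (DFunLike.congr_fun h i)
  · intro f hf
    have h a : f a ∈ Set.range (S.orderEmbOfFin hS) := by
      rw [range_orderEmbOfFin, ← (mem_filter.1 hf).2]
      exact mem_map_of_mem f (mem_univ a)
    choose τ hτ using h
    have hτ_inj : Function.Injective τ := fun a b hab => f.injective (by rw [← hτ, ← hτ, hab])
    exact ⟨Equiv.ofBijective τ (Finite.injective_iff_bijective.1 hτ_inj), mem_coe.2 (mem_univ _),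
      ext fun a => hτ a⟩

end Function.Embedding

open Function.Embedding

noncomputable def perDiag {r n : ℕ} (Λ : Matrix (Fin r) (Fin n) ℝ) (x : Fin n → ℂ) : ℂ :=
  ∑ f : Fin r ↪ Fin n, ∏ i, (Λ i (f i) : ℂ) * x (f i)

def HasPosTransversal {r n : ℕ} (Λ : Matrix (Fin r) (Fin n) ℝ) : Prop :=
  ∃ f : Fin r ↪ Fin n, ∀ i, 0 < Λ i (f i)

section expansion

variable {r m : ℕ}

lemma perRect_map_mul_diagonal {n : ℕ} (Λ : Matrix (Fin r) (Fin n) ℝ) (x : Fin n → ℂ) :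
    perRect (Λ.map (fun a => (a : ℂ)) * Matrix.diagonal x) = perDiag Λ x := by
  simp [perRect, perDiag, Matrix.mul_diagonal]

@[simp] lemma perDiag_fin_zero {n : ℕ} (Λ : Matrix (Fin 0) (Fin n) ℝ) (x : Fin n → ℂ) :
    perDiag Λ x = 1 := by
  simp [perDiag]

lemma perDiag_eq_sum_row (Λ : Matrix (Fin (r + 1)) (Fin (m + 1)) ℝ) (x : Fin (m + 1) → ℂ)
    (i : Fin (r + 1)) :
    perDiag Λ x = ∑ j, Λ i j * x j *
      perDiag (Λ.submatrix i.succAbove j.succAbove) (x ∘ j.succAbove) := by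
  rw [perDiag, ← sum_fiberwise univ (fun f => f i)]
  refine sum_congr rfl fun j _ => ?_
  rw [sum_filter_apply_eq, perDiag, mul_sum]
  refine sum_congr rfl fun g _ => ?_
  rw [Fin.prod_univ_succAbove _ i]
  simp

lemma perDiag_eq_add_sum_col (Λ : Matrix (Fin (r + 1)) (Fin (m + 1)) ℝ) (x : Fin (m + 1) → ℂ)
    (j : Fin (m + 1)) :
    perDiag Λ x = perDiag (Λ.submatrix id j.succAbove) (x ∘ j.succAbove) +
      x j * ∑ i, Λ i j * perDiag (Λ.submatrix i.succAbove j.succAbove) (x ∘ j.succAbove) := by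
  rw [perDiag, ← sum_filter_add_sum_filter_not univ (fun f => ∀ a, f a ≠ j),
    sum_filter_forall_ne]
  congr 1
  have hcover : ({f | ¬∀ a, f a ≠ j} : Finset (Fin (r + 1) ↪ Fin (m + 1))) =
      univ.biUnion fun i => {f | f i = j} := by
    ext f
    simp
  have hdisj : ((univ : Finset (Fin (r + 1))) : Set (Fin (r + 1))).PairwiseDisjoint
      fun i => ({f | f i = j} : Finset (Fin (r + 1) ↪ Fin (m + 1))) :=
    fun i _ i' _ hii' => disjoint_filter.2 fun f _ h h' => hii' (f.injective (h.trans h'.symm))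
  rw [hcover, sum_biUnion hdisj, mul_sum]
  refine sum_congr rfl fun i _ => ?_
  rw [sum_filter_apply_eq, perDiag, mul_sum, mul_sum]
  refine sum_congr rfl fun g _ => ?_
  rw [Fin.prod_univ_succAbove _ i]
  simp only [insertNth_apply_same, insertNth_apply_succAbove, Matrix.submatrix_apply,
    Function.comp_apply]
  ring

lemma perDiag_eq_sum_powersetCard {n : ℕ} (Λ : Matrix (Fin r) (Fin n) ℝ) (x : Fin n → ℂ) :
    perDiag Λ x = ∑ S ∈ (powersetCard r (univ : Finset (Fin n))).attach,
      (perSq (Λ.submatrix id ⇑(S.1.orderEmbOfFin (mem_powersetCard.mp S.2).2)) : ℂ) *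
        ∏ i ∈ S.1, x i := by
  have hmaps : ∀ f ∈ (univ : Finset (Fin r ↪ Fin n)), univ.map f ∈ powersetCard r univ := by
    simp
  rw [perDiag, ← sum_fiberwise_of_maps_to hmaps, ← sum_attach]
  refine sum_congr rfl fun ⟨S, hS⟩ _ => ?_
  rw [sum_filter_map_eq _ S (mem_powersetCard.mp hS).2, perSq, Complex.ofReal_sum, sum_mul]
  refine sum_congr rfl fun σ _ => ?_
  rw [prod_mul_distrib]
  congr 1
  · push_cast
    rfl
  · change _ = ∏ a ∈ S, x a
    conv_rhs => rw [← map_orderEmbOfFin_univ S (mem_powersetCard.mp hS).2, prod_map]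
    exact Equiv.prod_comp σ fun k => x (S.orderEmbOfFin _ k)

end expansion

section transversal

variable {r n : ℕ} {Λ : Matrix (Fin r) (Fin n) ℝ}

lemma perDiag_eq_zero_of_not_hasPosTransversal (hΛ : ∀ i j, 0 ≤ Λ i j)
    (h : ¬HasPosTransversal Λ) (x : Fin n → ℂ) : perDiag Λ x = 0 := by
  refine sum_eq_zero fun f _ => prod_eq_zero_iff.2 ?_
  obtain ⟨i, hi⟩ := not_forall.1 (not_exists.1 h f)
  exact ⟨i, mem_univ i, by simp [le_antisymm (not_lt.1 hi) (hΛ i (f i))]⟩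

lemma hasPosTransversal_of_perSq_submatrix_pos (hΛ : ∀ i j, 0 ≤ Λ i j) (e : Fin r ↪ Fin n)
    (h : 0 < perSq (Λ.submatrix id e)) : HasPosTransversal Λ := by
  obtain ⟨σ, -, hσ⟩ := exists_ne_zero_of_sum_ne_zero h.ne'
  exact ⟨σ.toEmbedding.trans e, fun i =>
    (hΛ _ _).lt_of_ne' (prod_ne_zero_iff.1 hσ i (mem_univ i))⟩

lemma hasPosTransversal_submatrix_succAbove {m : ℕ} {Λ : Matrix (Fin (r + 1)) (Fin (m + 1)) ℝ}
    {f : Fin (r + 1) ↪ Fin (m + 1)} (hf : ∀ i, 0 < Λ i (f i)) (i : Fin (r + 1)) :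
    HasPosTransversal (Λ.submatrix i.succAbove (f i).succAbove) := by
  obtain ⟨g, hg⟩ := exists_eq_insertNth i f
  refine ⟨g, fun k => ?_⟩
  have hfk : f (i.succAbove k) = (f i).succAbove (g k) := by
    simpa using DFunLike.congr_fun hg (i.succAbove k)
  simpa [hfk] using hf (i.succAbove k)

end transversal

lemma Complex.re_inv_pos {z : ℂ} (hz : 0 < z.re) : 0 < z⁻¹.re := by
  rw [Complex.inv_re]
  exact div_pos hz (Complex.normSq_pos.2 fun h => by simp [h] at hz)

def ColumnRatioPos (r : ℕ) : Prop :=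
  ∀ {m : ℕ} (Λ : Matrix (Fin r) (Fin (m + 1)) ℝ), (∀ i j, 0 ≤ Λ i j) → ∀ j,
    HasPosTransversal (Λ.submatrix id j.succAbove) → ∀ x : Fin (m + 1) → ℂ, (∀ k, 0 < (x k).re) →
    0 < (perDiag Λ x / (x j * perDiag (Λ.submatrix id j.succAbove) (x ∘ j.succAbove))).re

section induction

variable {r : ℕ}

lemma re_row_term_pos (hcol : ColumnRatioPos r) {m : ℕ}
    {Λ : Matrix (Fin (r + 1)) (Fin (m + 1)) ℝ} (hΛ : ∀ i j, 0 ≤ Λ i j) {x : Fin (m + 1) → ℂ}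
    (hx : ∀ k, 0 < (x k).re) (i : Fin (r + 1)) (j : Fin (m + 1))
    (h : HasPosTransversal (Λ.submatrix i.succAbove j.succAbove)) :
    0 < (x j * (perDiag (Λ.submatrix i.succAbove j.succAbove) (x ∘ j.succAbove) /
      perDiag (Λ.submatrix i.succAbove id) x)).re := by
  rw [← mul_div_assoc, ← inv_div]
  exact Complex.re_inv_pos (hcol (Λ.submatrix i.succAbove id) (fun _ _ => hΛ _ _) j h x hx)

lemma re_row_term_nonneg (hcol : ColumnRatioPos r) {m : ℕ}
    {Λ : Matrix (Fin (r + 1)) (Fin (m + 1)) ℝ} (hΛ : ∀ i j, 0 ≤ Λ i j) {x : Fin (m + 1) → ℂ}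
    (hx : ∀ k, 0 < (x k).re) (i : Fin (r + 1)) (j : Fin (m + 1)) :
    0 ≤ (x j * (perDiag (Λ.submatrix i.succAbove j.succAbove) (x ∘ j.succAbove) /
      perDiag (Λ.submatrix i.succAbove id) x)).re := by
  by_cases h : HasPosTransversal (Λ.submatrix i.succAbove j.succAbove)
  · exact (re_row_term_pos hcol hΛ hx i j h).le
  · rw [perDiag_eq_zero_of_not_hasPosTransversal (Λ := Λ.submatrix _ _) (fun _ _ => hΛ _ _) h]
    simp

lemma re_perDiag_div_perDiag_row_pos (hcol : ColumnRatioPos r) {n : ℕ}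
    {Λ : Matrix (Fin (r + 1)) (Fin n) ℝ} (hΛ : ∀ i j, 0 ≤ Λ i j) (hT : HasPosTransversal Λ)
    {x : Fin n → ℂ} (hx : ∀ k, 0 < (x k).re) (i : Fin (r + 1)) :
    0 < (perDiag Λ x / perDiag (Λ.submatrix i.succAbove id) x).re := by
  obtain ⟨f, hf⟩ := hT
  cases n with
  | zero => exact (f 0).elim0
  | succ m =>
    rw [perDiag_eq_sum_row Λ x i, sum_div, Complex.re_sum]
    simp only [mul_assoc, mul_div_assoc, Complex.re_ofReal_mul]
    exact sum_pos' (fun j _ => mul_nonneg (hΛ i j) (re_row_term_nonneg hcol hΛ hx i j))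
      ⟨f i, mem_univ _, mul_pos (hf i)
        (re_row_term_pos hcol hΛ hx i (f i) (hasPosTransversal_submatrix_succAbove hf i))⟩

lemma perDiag_ne_zero_of_columnRatioPos (hcol : ColumnRatioPos r) {n : ℕ}
    {Λ : Matrix (Fin (r + 1)) (Fin n) ℝ} (hΛ : ∀ i j, 0 ≤ Λ i j) (hT : HasPosTransversal Λ)
    {x : Fin n → ℂ} (hx : ∀ k, 0 < (x k).re) : perDiag Λ x ≠ 0 := fun h0 => by
  simpa [h0] using re_perDiag_div_perDiag_row_pos hcol hΛ hT hx 0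

lemma columnRatioPos_succ (hcol : ColumnRatioPos r) : ColumnRatioPos (r + 1) := by
  intro m Λ hΛ j hT x hx
  have hxj : x j ≠ 0 := fun h => by simpa [h] using hx j
  have hM : perDiag (Λ.submatrix id j.succAbove) (x ∘ j.succAbove) ≠ 0 :=
    perDiag_ne_zero_of_columnRatioPos hcol (fun _ _ => hΛ _ _) hT fun _ => hx _
  rw [perDiag_eq_add_sum_col Λ x j, add_div, div_mul_cancel_right₀ hM, mul_div_mul_left _ _ hxj,
    Complex.add_re, sum_div, Complex.re_sum]
  refine add_pos_of_pos_of_nonneg (Complex.re_inv_pos (hx j)) (sum_nonneg fun i _ => ?_)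
  rw [mul_div_assoc, Complex.re_ofReal_mul, ← inv_div]
  exact mul_nonneg (hΛ i j) (Complex.re_inv_pos
    (re_perDiag_div_perDiag_row_pos hcol (fun _ _ => hΛ _ _) hT (fun _ => hx _) i)).le

end induction

lemma columnRatioPos_zero : ColumnRatioPos 0 := by
  intro m Λ _ j _ x hx
  simpa using Complex.re_inv_pos (hx j)

theorem columnRatioPos : ∀ r, ColumnRatioPos r
  | 0 => columnRatioPos_zero
  | r + 1 => columnRatioPos_succ (columnRatioPos r)

theorem perDiag_ne_zero {r n : ℕ} {Λ : Matrix (Fin r) (Fin n) ℝ} (hΛ : ∀ i j, 0 ≤ Λ i j)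
    (hT : HasPosTransversal Λ) {x : Fin n → ℂ} (hx : ∀ k, 0 < (x k).re) : perDiag Λ x ≠ 0 := by
  cases r with
  | zero => simp
  | succ r => exact perDiag_ne_zero_of_columnRatioPos (columnRatioPos r) hΛ hT hx

theorem stmt19_general {r n : ℕ} (Λ : Matrix (Fin r) (Fin n) ℝ)
    (hΛ : ∀ i j, 0 ≤ Λ i j) :
    (∀ x : Fin n → ℂ,
      perRect (Λ.map (fun a => (a : ℂ)) * Matrix.diagonal x) =
        ∑ S ∈ (Finset.powersetCard r (Finset.univ : Finset (Fin n))).attach,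
          ((perSq (Λ.submatrix id ⇑(S.1.orderEmbOfFin (Finset.mem_powersetCard.mp S.2).2)) : ℂ)
            * ∏ i ∈ S.1, x i)) ∧
    ((∀ x : Fin n → ℂ, perRect (Λ.map (fun a => (a : ℂ)) * Matrix.diagonal x) = 0) ∨
      (∀ x : Fin n → ℂ, (∀ i, 0 < (x i).re) →
        perRect (Λ.map (fun a => (a : ℂ)) * Matrix.diagonal x) ≠ 0)) ∧
    (∀ x : Fin n → ℂ, (∀ i, 0 < (x i).re) →
      (∃ S : Finset (Fin n), ∃ hS : S.card = r,
        0 < perSq (Λ.submatrix id ⇑(S.orderEmbOfFin hS))) →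
      perRect (Λ.map (fun a => (a : ℂ)) * Matrix.diagonal x) ≠ 0) := by
  simp only [perRect_map_mul_diagonal]
  refine ⟨perDiag_eq_sum_powersetCard Λ, ?_, ?_⟩
  · by_cases hT : HasPosTransversal Λ
    · exact Or.inr fun x hx => perDiag_ne_zero hΛ hT hx
    · exact Or.inl (perDiag_eq_zero_of_not_hasPosTransversal hΛ hT)
  · rintro x hx ⟨S, hS, hpos⟩
    exact perDiag_ne_zero hΛ
      (hasPosTransversal_of_perSq_submatrix_pos hΛ (S.orderEmbOfFin hS).toEmbedding hpos) hx

theorem stmt19 {r n : ℕ} (hrn : r ≤ n) (Λ : Matrix (Fin r) (Fin n) ℝ)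
    (hΛ : ∀ i j, 0 ≤ Λ i j) :
    (∀ x : Fin n → ℂ,
      perRect (Λ.map (fun a => (a : ℂ)) * Matrix.diagonal x) =
        ∑ S ∈ (Finset.powersetCard r (Finset.univ : Finset (Fin n))).attach,
          ((perSq (Λ.submatrix id ⇑(S.1.orderEmbOfFin (Finset.mem_powersetCard.mp S.2).2)) : ℂ)
            * ∏ i ∈ S.1, x i)) ∧
    ((∀ x : Fin n → ℂ, perRect (Λ.map (fun a => (a : ℂ)) * Matrix.diagonal x) = 0) ∨
      (∀ x : Fin n → ℂ, (∀ i, 0 < (x i).re) →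
        perRect (Λ.map (fun a => (a : ℂ)) * Matrix.diagonal x) ≠ 0)) ∧
    (∀ x : Fin n → ℂ, (∀ i, 0 < (x i).re) →
      (∃ S : Finset (Fin n), ∃ hS : S.card = r,
        0 < perSq (Λ.submatrix id ⇑(S.orderEmbOfFin hS))) →
      perRect (Λ.map (fun a => (a : ℂ)) * Matrix.diagonal x) ≠ 0) :=
  stmt19_general Λ hΛ
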